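/- arXiv:0806.1776 — 3 statements merged into one kernel-verified Lean document; each statement's English description precedes it below -/
import Mathlib

section
/- The maximal size of a family of pairwise weakly separated subsets of [m], each of cardinality between k and l, is at most C(m+1,2) - C(m+1-l,2) - C(k+1,2) + 1. -/
open Finset

/-- Pairs `{u<v}` and `{x<y}` (values in `ℕ ∪ {∞}`) are non-nesting if
neither `x<u<v<y` nor `u<x<y<v`. -/
def PairNonNesting (u v x y : WithTop ℕ) : Prop :=
  ¬ (x < u ∧ u < v ∧ v < y) ∧ ¬ (u < x ∧ x < y ∧ y < v)

/-- Pairs `{u<v}` and `{x<y}` are non-crossing if neither `x<u<y<v` nor `u<x<v<y`. -/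
def PairNonCrossing (u v x y : WithTop ℕ) : Prop :=
  ¬ (x < u ∧ u < y ∧ y < v) ∧ ¬ (u < x ∧ x < v ∧ v < y)

/-- Remove one common entry (equal entries in equal positions) from the two lists. -/
def stripOnce (I J : List ℕ) : Option (List ℕ × List ℕ) :=
  ((List.range (min I.length J.length)).find? (fun s => I.getD s 0 == J.getD s 0)).map
    (fun s => (I.eraseIdx s, J.eraseIdx s))

def stripAux : ℕ → List ℕ → List ℕ → List ℕ × List ℕ
  | 0, I, J => (I, J)
  | n+1, I, J =>
    match stripOnce I J with
    | none => (I, J)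
    | some (I', J') => stripAux n I' J'

/-- Repeatedly remove the "common part" (equal entries in equal positions). -/
def strip (I J : List ℕ) : List ℕ × List ℕ := stripAux I.length I J

/-- The `s`-th entry (0-indexed) of the list, viewed in `ℕ ∪ {∞}`, with `∞` beyond the end. -/
def entry (l : List ℕ) (s : ℕ) : WithTop ℕ :=
  (l.map (fun a => (a : WithTop ℕ))).getD s ⊤

/-- Non-nesting condition on sorted lists `I`, `J` with `I` the shorter one:
after removing the common part, all consecutive-difference pairs are non-nesting
(with the `∞` convention for the shorter list). -/
def ListsNonNesting (I J : List ℕ) : Prop :=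
  ∀ s : ℕ, s + 1 < (strip I J).2.length →
    PairNonNesting (entry (strip I J).1 s) (entry (strip I J).1 (s+1))
      (entry (strip I J).2 s) (entry (strip I J).2 (s+1))

def ListsNonCrossing (I J : List ℕ) : Prop :=
  ∀ s : ℕ, s + 1 < (strip I J).2.length →
    PairNonCrossing (entry (strip I J).1 s) (entry (strip I J).1 (s+1))
      (entry (strip I J).2 s) (entry (strip I J).2 (s+1))

/-- The increasing list of elements of a finite set. -/
def sortedList (I : Finset ℕ) : List ℕ := I.sort (· ≤ ·)

/-- Subsets `I`, `J` are non-nesting. -/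
def SetsNonNesting (I J : Finset ℕ) : Prop :=
  if I.card ≤ J.card then ListsNonNesting (sortedList I) (sortedList J)
  else ListsNonNesting (sortedList J) (sortedList I)

/-- Subsets `I`, `J` are non-crossing. -/
def SetsNonCrossing (I J : Finset ℕ) : Prop :=
  if I.card ≤ J.card then ListsNonCrossing (sortedList I) (sortedList J)
  else ListsNonCrossing (sortedList J) (sortedList I)

/-- `A ≺ B`: every element of `A` is smaller than every element of `B`. -/
def Precedes (A B : Finset ℕ) : Prop := ∀ a ∈ A, ∀ b ∈ B, a < b

/-- Leclerc–Zelevinsky weak separation. -/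
def WeaklySeparated (I J : Finset ℕ) : Prop :=
  (J.card ≤ I.card ∧ ∃ J₁ J₂ : Finset ℕ, Disjoint J₁ J₂ ∧ J \ I = J₁ ∪ J₂ ∧
    Precedes J₁ (I \ J) ∧ Precedes (I \ J) J₂) ∨
  (I.card ≤ J.card ∧ ∃ I₁ I₂ : Finset ℕ, Disjoint I₁ I₂ ∧ I \ J = I₁ ∪ I₂ ∧
    Precedes I₁ (J \ I) ∧ Precedes (J \ I) I₂)

/-- Number of north steps of the path `p(I)` among its first `k` steps. -/
def northCount (I : Finset ℕ) (k : ℕ) : ℕ := (I.filter (fun i => i ≤ k)).card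

/-- Paths `p(I)`, `p(J)` are non-crossing: one lies weakly northwest of the other
along their entire length. -/
def PathsNonCrossing (I J : Finset ℕ) : Prop :=
  (∀ k, northCount J k ≤ northCount I k) ∨ (∀ k, northCount I k ≤ northCount J k)

/-- `[k₁, k₂]` (in step coordinates) is a proper common part of the paths `p(I)`, `p(J)`
of length `m`: a maximal shared connected subpath containing neither the source nor an
endpoint.  Maximality is expressed by the two paths separating just before `k₁` and just
after `k₂`. -/
def ProperCommonPart (m : ℕ) (I J : Finset ℕ) (k₁ k₂ : ℕ) : Prop :=
  1 ≤ k₁ ∧ k₁ ≤ k₂ ∧ k₂ < m ∧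
  (∀ k, k₁ ≤ k → k ≤ k₂ → northCount I k = northCount J k) ∧
  northCount I (k₁ - 1) ≠ northCount J (k₁ - 1) ∧
  northCount I (k₂ + 1) ≠ northCount J (k₂ + 1)

/-- Paths `p(I)`, `p(J)` are non-kissing: at every proper common part each path leaves
in the same direction in which it entered (the common part is a crossing, not a kiss). -/
def PathsNonKissing (m : ℕ) (I J : Finset ℕ) : Prop :=
  ∀ k₁ k₂, ProperCommonPart m I J k₁ k₂ → ((k₁ ∈ I) ↔ (k₂ + 1 ∈ I))

/-- Number of north steps among the first `k` steps, for `k ∈ ℤ` (zero for `k ≤ 0`). -/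
def northCountZ (I : Finset ℕ) (k : ℤ) : ℤ := (northCount I k.toNat : ℤ)

/-- The indicator Gelfand–Tsetlin pattern of the path `p(I)`: the cell
`[x,x+1] × [y,y+1]` gets a `1` if it lies southeast of the path and `0` if northwest. -/
noncomputable def Tpat (I : Finset ℕ) (x y : ℤ) : ℝ :=
  if y + 1 ≤ northCountZ I (x + y + 1) then 1 else 0

/-- `(x,y)` is a node of the partial staircase `L ⊆ L_m` with set of sink heights `A`:
it lies (weakly) southwest of some sink `(m-j, j)`, `j ∈ A`. -/
def NodeL (m : ℕ) (A : Finset ℕ) (x y : ℤ) : Prop :=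
  0 ≤ x ∧ 0 ≤ y ∧ ∃ j ∈ A, x + j ≤ m ∧ y ≤ j

/-- Same, with natural-number coordinates. -/
def InL (m : ℕ) (A : Finset ℕ) (x y : ℕ) : Prop :=
  ∃ j ∈ A, x + j ≤ m ∧ y ≤ j

/-- The path `p(I)` is contained in the partial staircase with sink heights `A`. -/
def PathInL (m : ℕ) (A : Finset ℕ) (I : Finset ℕ) : Prop :=
  ∀ k ≤ m, InL m A (k - northCount I k) (northCount I k)

/-- A critical node has edges of `L` leaving it toward both the north and the east. -/
def CriticalNode (m : ℕ) (A : Finset ℕ) (x y : ℕ) : Prop :=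
  InL m A (x + 1) y ∧ InL m A x (y + 1)

open Classical in
/-- `N(L)`: the number of critical nodes of the partial staircase. -/
noncomputable def numCritical (m : ℕ) (A : Finset ℕ) : ℕ :=
  ((Finset.range (m+1) ×ˢ Finset.range (m+1)).filter
    (fun p => CriticalNode m A p.1 p.2)).card

/-! ### Auxiliary lemmas for the upper bound -/

lemma ws_symm {I J : Finset ℕ} (h : WeaklySeparated I J) : WeaklySeparated J I :=
  Or.symm h

lemma ws_aux_sdiff_insert {M : ℕ} {I J : Finset ℕ} (hMI : M ∉ I) :
    I \ insert M J = I \ J := by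
  ext x
  simp only [mem_sdiff, mem_insert, not_or]
  constructor
  · rintro ⟨hx, -, h2⟩; exact ⟨hx, h2⟩
  · rintro ⟨hx, h2⟩; exact ⟨hx, fun he => hMI (he ▸ hx), h2⟩

lemma ws_aux_insert_sdiff {M : ℕ} {I J : Finset ℕ} (hMI : M ∉ I) :
    insert M J \ I = insert M (J \ I) := by
  ext x
  simp only [mem_sdiff, mem_insert]
  constructor
  · rintro ⟨h1 | h1, h2⟩
    · exact Or.inl h1
    · exact Or.inr ⟨h1, h2⟩
  · rintro (h1 | ⟨h1, h2⟩)
    · exact ⟨Or.inl h1, h1 ▸ hMI⟩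
    · exact ⟨Or.inr h1, h2⟩

/-- From the "split" witness of weak separation of `I` and `insert M J`, where `M`
dominates `I`, extract that `I \ J` entirely precedes `J \ I`. -/
lemma precedes_of_split {M : ℕ} {I J : Finset ℕ} (hMI : M ∉ I) (hI : ∀ x ∈ I, x ≤ M)
    (h : ∃ I₁ I₂ : Finset ℕ, Disjoint I₁ I₂ ∧ I \ insert M J = I₁ ∪ I₂ ∧
      Precedes I₁ (insert M J \ I) ∧ Precedes (insert M J \ I) I₂) :
    Precedes (I \ J) (J \ I) := by
  obtain ⟨I₁, I₂, -, hun, h₁, h₂⟩ := h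
  rw [ws_aux_sdiff_insert hMI] at hun
  have hMmem : M ∈ insert M J \ I := by
    rw [mem_sdiff]; exact ⟨mem_insert_self _ _, hMI⟩
  have hI₂ : I₂ = ∅ := by
    rw [eq_empty_iff_forall_notMem]
    intro b hb
    have hbI : b ∈ I := by
      have : b ∈ I \ J := hun ▸ mem_union_right I₁ hb
      exact (mem_sdiff.1 this).1
    have h1 : M < b := h₂ M hMmem b hb
    have h2 : b ≤ M := hI b hbI
    omega
  intro a ha b hb
  have haI₁ : a ∈ I₁ := by
    have : a ∈ I₁ ∪ I₂ := hun ▸ ha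
    rw [hI₂, union_empty] at this
    exact this
  exact h₁ a haI₁ b (by rw [mem_sdiff] at hb ⊢; exact ⟨mem_insert_of_mem hb.1, hb.2⟩)

/-- Removing the dominating element `M` from one side preserves weak separation. -/
lemma ws_of_ws_insert {M : ℕ} {I J : Finset ℕ} (hMI : M ∉ I) (hMJ : M ∉ J)
    (hI : ∀ x ∈ I, x ≤ M) (h : WeaklySeparated I (insert M J)) :
    WeaklySeparated I J := by
  have hIJ : I \ insert M J = I \ J := ws_aux_sdiff_insert hMI
  have hJI : insert M J \ I = insert M (J \ I) := ws_aux_insert_sdiff hMI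
  have hMJI : M ∉ J \ I := fun hc => hMJ (mem_sdiff.1 hc).1
  rcases h with ⟨hcard, J₁, J₂, hdis, hun, h₁, h₂⟩ | ⟨hcard, hex⟩
  · left
    have hcard' : (insert M J).card = J.card + 1 := card_insert_of_notMem hMJ
    refine ⟨by omega, J₁.erase M, J₂.erase M,
      hdis.mono (erase_subset _ _) (erase_subset _ _), ?_, ?_, ?_⟩
    · have : (J₁ ∪ J₂).erase M = J \ I := by
        rw [← hun, hJI, erase_insert hMJI]
      rw [← this, erase_union_distrib]
    · intro a ha b hb
      exact h₁ a (mem_of_mem_erase ha) b (hIJ ▸ hb)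
    · intro a ha b hb
      exact h₂ a (hIJ ▸ ha) b (mem_of_mem_erase hb)
  · have hpre : Precedes (I \ J) (J \ I) := precedes_of_split hMI hI hex
    rcases le_or_gt I.card J.card with hc | hc
    · right
      exact ⟨hc, I \ J, ∅, disjoint_empty_right _, (union_empty _).symm, hpre,
        fun a _ b hb => absurd hb (notMem_empty b)⟩
    · left
      exact ⟨hc.le, ∅, J \ I, disjoint_empty_left _, (empty_union _).symm,
        fun a ha => absurd ha (notMem_empty a), hpre⟩

/-- Removing a common element from both sides preserves weak separation. -/
lemma ws_of_ws_insert_both {M : ℕ} {I J : Finset ℕ} (hMI : M ∉ I) (hMJ : M ∉ J)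
    (h : WeaklySeparated (insert M I) (insert M J)) : WeaklySeparated I J := by
  have key : ∀ A B : Finset ℕ, M ∉ A → insert M A \ insert M B = A \ B := by
    intro A B hMA
    ext x
    simp only [mem_sdiff, mem_insert, not_or]
    constructor
    · rintro ⟨h1 | h1, h2, h3⟩
      · exact absurd h1 h2
      · exact ⟨h1, h3⟩
    · rintro ⟨hx, hnx⟩
      exact ⟨Or.inr hx, fun he => hMA (he ▸ hx), hnx⟩
  have e1 : insert M I \ insert M J = I \ J := key I J hMI
  have e2 : insert M J \ insert M I = J \ I := key J I hMJ
  have c1 : (insert M I).card = I.card + 1 := card_insert_of_notMem hMI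
  have c2 : (insert M J).card = J.card + 1 := card_insert_of_notMem hMJ
  rcases h with ⟨hc, J₁, J₂, hd, hun, h₁, h₂⟩ | ⟨hc, I₁, I₂, hd, hun, h₁, h₂⟩
  · rw [e2] at hun
    rw [e1] at h₁ h₂
    exact Or.inl ⟨by omega, J₁, J₂, hd, hun, h₁, h₂⟩
  · rw [e1] at hun
    rw [e2] at h₁ h₂
    exact Or.inr ⟨by omega, I₁, I₂, hd, hun, h₁, h₂⟩

/-- Two distinct sets `I`, `I'` of equal cardinality cannot satisfy both
`WeaklySeparated I (insert M I')` and `WeaklySeparated I' (insert M I)`,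
when `M` dominates both. -/
lemma ws_card_ne {M : ℕ} {I I' : Finset ℕ} (hMI : M ∉ I) (hMI' : M ∉ I')
    (hI : ∀ x ∈ I, x ≤ M) (hI' : ∀ x ∈ I', x ≤ M) (hne : I ≠ I')
    (hcard : I.card = I'.card)
    (h1 : WeaklySeparated I (insert M I')) (h2 : WeaklySeparated I' (insert M I)) :
    False := by
  have hp1 : Precedes (I \ I') (I' \ I) := by
    rcases h1 with ⟨hc, -⟩ | ⟨-, hex⟩
    · rw [card_insert_of_notMem hMI'] at hc; omega
    · exact precedes_of_split hMI hI hex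
  have hp2 : Precedes (I' \ I) (I \ I') := by
    rcases h2 with ⟨hc, -⟩ | ⟨-, hex⟩
    · rw [card_insert_of_notMem hMI] at hc; omega
    · exact precedes_of_split hMI' hI' hex
  have hne1 : (I \ I').Nonempty := by
    rw [sdiff_nonempty]
    intro hsub
    exact hne (eq_of_subset_of_card_le hsub (by omega))
  have hne2 : (I' \ I).Nonempty := by
    rw [sdiff_nonempty]
    intro hsub
    exact hne (eq_of_subset_of_card_le hsub (by omega)).symm
  obtain ⟨a, ha⟩ := hne1
  obtain ⟨b, hb⟩ := hne2
  have h3 := hp1 a ha b hb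
  have h4 := hp2 b hb a ha
  omega

/-! ### Arithmetic lemmas -/

lemma choose_two_succ (n : ℕ) : (n+1).choose 2 = n.choose 2 + n := by
  rw [Nat.choose_succ_succ, Nat.choose_one_right, Nat.add_comm]

lemma two_mul_choose_two (n : ℕ) : 2 * n.choose 2 = n * (n - 1) := by
  induction n with
  | zero => rfl
  | succ n ih =>
    rw [choose_two_succ, Nat.mul_add, ih]
    cases n with
    | zero => rfl
    | succ p =>
      simp only [Nat.add_sub_cancel]
      ring

lemma choose_two_superadd {a b : ℕ} (ha : 1 ≤ a) (hb : 1 ≤ b) :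
    a.choose 2 + b.choose 2 ≤ (a + b - 1).choose 2 := by
  have h1 := two_mul_choose_two a
  have h2 := two_mul_choose_two b
  have h3 := two_mul_choose_two (a + b - 1)
  obtain ⟨a', rfl⟩ := Nat.exists_eq_add_of_le ha
  obtain ⟨b', rfl⟩ := Nat.exists_eq_add_of_le hb
  have key : (1 + a') * (1 + a' - 1) + (1 + b') * (1 + b' - 1) ≤
      (1 + a' + (1 + b') - 1) * (1 + a' + (1 + b') - 1 - 1) := by
    have e1 : (1 + a') * (1 + a' - 1) = (1 + a') * a' := by congr 1; omega
    have e2 : (1 + b') * (1 + b' - 1) = (1 + b') * b' := by congr 1; omega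
    have e3 : (1 + a' + (1 + b') - 1) * (1 + a' + (1 + b') - 1 - 1) =
        (1 + a' + b') * (a' + b') := by
      congr 1 <;> omega
    rw [e1, e2, e3]
    nlinarith [Nat.zero_le (a' * b')]
  omega

lemma choose_two_exact {m k l : ℕ} (hkl : k ≤ l) (hlm : l ≤ m) :
    (m + 1 - l).choose 2 + (k + 1).choose 2 ≤ (m + 1).choose 2 := by
  have h1 : (m + 1 - l).choose 2 + (k + 1).choose 2 ≤
      ((m + 1 - l) + (k + 1) - 1).choose 2 :=
    choose_two_superadd (by omega) (by omega)
  have h2 : ((m + 1 - l) + (k + 1) - 1).choose 2 ≤ (m + 1).choose 2 :=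
    Nat.choose_le_choose 2 (by omega)
  omega

lemma key_ineq {m k l : ℕ} (hkl : k ≤ l) (hlm : l ≤ m + 1) :
    ((m+1).choose 2 - (m+1 - min l m).choose 2 - (k-1+1).choose 2 + 1) + (l - k) ≤
      (m+1+1).choose 2 - (m+1+1-l).choose 2 - (k+1).choose 2 + 1 := by
  have h1 : (m+1+1).choose 2 = (m+1).choose 2 + (m+1) := choose_two_succ (m+1)
  have hk1 : (k+1).choose 2 = (k-1+1).choose 2 + k := by
    rcases Nat.eq_zero_or_pos k with rfl | hk
    · rfl
    · have e : k - 1 + 1 = k := by omega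
      rw [e, choose_two_succ k]
  have hc1 : (1 : ℕ).choose 2 = 0 := rfl
  rcases le_or_gt l m with hl | hl
  · have hmin : min l m = l := min_eq_left hl
    rw [hmin]
    have h3 : (m+1+1-l).choose 2 = (m+1-l).choose 2 + (m+1-l) := by
      have e : m + 1 + 1 - l = (m + 1 - l) + 1 := by omega
      rw [e, choose_two_succ]
    have hE0 : (m+1-l).choose 2 + (k-1+1).choose 2 ≤ (m+1).choose 2 :=
      choose_two_exact (m := m) (k := k-1) (l := l) (by omega) hl
    have hE1 : (m+1+1-l).choose 2 + (k+1).choose 2 ≤ (m+1+1).choose 2 :=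
      choose_two_exact (m := m+1) (k := k) (l := l) hkl hlm
    omega
  · have hl' : l = m + 1 := by omega
    subst hl'
    have hmin : min (m+1) m = m := min_eq_right (by omega)
    have e1 : m + 1 - m = 1 := by omega
    have e2 : m + 1 + 1 - (m + 1) = 1 := by omega
    rw [hmin, e1, e2, hc1]
    have hE0 : (k-1+1).choose 2 ≤ (m+1).choose 2 := by
      have h := choose_two_exact (m := m) (k := k-1) (l := m) (by omega) (le_refl m)
      rw [e1, hc1] at h
      omega
    have hE1 : (k+1).choose 2 ≤ (m+1+1).choose 2 := by
      have h := choose_two_exact (m := m+1) (k := k) (l := m+1) hkl (le_refl _)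
      rw [e2, hc1] at h
      omega
    omega

/-- The maximal size of a family of pairwise weakly separated subsets of `[m]`, each of
cardinality between `k` and `l`, is at most
`C(m+1,2) - C(m+1-l,2) - C(k+1,2) + 1`. -/
theorem weaklySeparated_family_card_le (m k l : ℕ) (hkl : k ≤ l) (hlm : l ≤ m)
    (F : Finset (Finset ℕ))
    (hF : ∀ I ∈ F, I ⊆ Finset.Icc 1 m ∧ k ≤ I.card ∧ I.card ≤ l)
    (hws : ∀ I ∈ F, ∀ J ∈ F, WeaklySeparated I J) :
    F.card ≤ (m+1).choose 2 - (m+1-l).choose 2 - (k+1).choose 2 + 1 := by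
  classical
  induction m generalizing k l F with
  | zero =>
    have hF1 : F ⊆ {∅} := by
      intro I hI
      obtain ⟨hsub, -, -⟩ := hF I hI
      rw [mem_singleton]
      have he : Finset.Icc 1 0 = ∅ := Finset.Icc_eq_empty (by omega)
      rw [he, subset_empty] at hsub
      exact hsub
    have := card_le_card hF1
    simp only [card_singleton] at this
    omega
  | succ m ih =>
    have hle : ∀ I ∈ F, ∀ x ∈ I, x ≤ m + 1 := by
      intro I hI x hx
      exact (mem_Icc.1 ((hF I hI).1 hx)).2
    set F₀ := F.filter (fun I => m + 1 ∉ I) with hF₀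
    set F₁ := F.filter (fun I => m + 1 ∈ I) with hF₁
    set F₁' := F₁.image (fun I => I.erase (m+1)) with hF₁'
    set G := F₀ ∪ F₁' with hG
    set S := F₀.filter (fun I => insert (m+1) I ∈ F) with hSdef
    have hmemG : ∀ X ∈ G, (X ∈ F ∧ m+1 ∉ X) ∨ ∃ J, J ∈ F ∧ m+1 ∈ J ∧ X = J.erase (m+1) := by
      intro X hX
      rcases mem_union.1 hX with h | h
      · exact Or.inl (mem_filter.1 h)
      · obtain ⟨J, hJ, rfl⟩ := mem_image.1 h
        obtain ⟨hJF, hJM⟩ := mem_filter.1 hJ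
        exact Or.inr ⟨J, hJF, hJM, rfl⟩
    have hwsA : ∀ X ∈ F, m+1 ∉ X → ∀ J ∈ F, m+1 ∈ J →
        WeaklySeparated X (J.erase (m+1)) := by
      intro X hX hXM J hJ hJM
      have h := hws X hX J hJ
      rw [← insert_erase hJM] at h
      exact ws_of_ws_insert hXM (notMem_erase _ _) (hle X hX) h
    have hGsub : ∀ X ∈ G, X ⊆ Finset.Icc 1 m ∧ k - 1 ≤ X.card ∧ X.card ≤ min l m := by
      intro X hX
      rcases hmemG X hX with ⟨hXF, hXM⟩ | ⟨J, hJF, hJM, rfl⟩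
      · obtain ⟨hsub, hk', hl'⟩ := hF X hXF
        have hsub' : X ⊆ Finset.Icc 1 m := by
          intro x hx
          have h1 := mem_Icc.1 (hsub hx)
          have h2 : x ≠ m + 1 := fun he => hXM (he ▸ hx)
          rw [mem_Icc]
          omega
        have hcm : X.card ≤ m := by
          have := card_le_card hsub'
          rwa [Nat.card_Icc, Nat.add_sub_cancel] at this
        exact ⟨hsub', by omega, le_min hl' hcm⟩
      · obtain ⟨hsub, hk', hl'⟩ := hF J hJF
        have hce : (J.erase (m+1)).card = J.card - 1 := card_erase_of_mem hJM
        have h1k : 1 ≤ J.card := card_pos.2 ⟨m+1, hJM⟩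
        have hsub' : J.erase (m+1) ⊆ Finset.Icc 1 m := by
          intro x hx
          have h1 := mem_Icc.1 (hsub (mem_of_mem_erase hx))
          have h2 : x ≠ m + 1 := ne_of_mem_erase hx
          rw [mem_Icc]
          omega
        exact ⟨hsub', by omega, le_min (by omega) (by omega)⟩
    have hGws : ∀ X ∈ G, ∀ Y ∈ G, WeaklySeparated X Y := by
      intro X hX Y hY
      rcases hmemG X hX with ⟨hXF, hXM⟩ | ⟨I, hIF, hIM, rfl⟩ <;>
        rcases hmemG Y hY with ⟨hYF, hYM⟩ | ⟨J, hJF, hJM, rfl⟩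
      · exact hws X hXF Y hYF
      · exact hwsA X hXF hXM J hJF hJM
      · exact ws_symm (hwsA Y hYF hYM I hIF hIM)
      · apply ws_of_ws_insert_both (M := m+1) (notMem_erase _ _) (notMem_erase _ _)
        rw [insert_erase hIM, insert_erase hJM]
        exact hws I hIF J hJF
    have hIH := ih (k-1) (min l m) (le_min (by omega) (by omega)) (min_le_right l m)
      G hGsub hGws
    have hcard0 : F₁.card + F₀.card = F.card :=
      card_filter_add_card_filter_not (fun I => m+1 ∈ I)
    have hcard1 : F₁'.card = F₁.card := by
      apply card_image_of_injOn
      intro I hI J hJ hEq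
      have hIM : m+1 ∈ I := (mem_filter.1 hI).2
      have hJM : m+1 ∈ J := (mem_filter.1 hJ).2
      have hEq' : I.erase (m+1) = J.erase (m+1) := hEq
      rw [← insert_erase hIM, hEq', insert_erase hJM]
    have hcard2 : G.card + (F₀ ∩ F₁').card = F₀.card + F₁'.card :=
      card_union_add_card_inter _ _
    have hsubS : F₀ ∩ F₁' ⊆ S := by
      intro X hX
      obtain ⟨hX0, hX1⟩ := mem_inter.1 hX
      obtain ⟨J, hJ, hJE⟩ := mem_image.1 hX1
      obtain ⟨hJF, hJM⟩ := mem_filter.1 hJ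
      rw [hSdef, mem_filter]
      refine ⟨hX0, ?_⟩
      rw [← hJE, insert_erase hJM]
      exact hJF
    have hcardS : S.card ≤ l - k := by
      rcases Nat.eq_zero_or_pos l with rfl | hl
      · have hSe : S = ∅ := by
          rw [eq_empty_iff_forall_notMem]
          intro I hI
          obtain ⟨hI0, hIF⟩ := mem_filter.1 hI
          obtain ⟨hIFF, hIM⟩ := mem_filter.1 hI0
          have h1 := (hF _ hIF).2.2
          have h2 : (insert (m+1) I).card = I.card + 1 := card_insert_of_notMem hIM
          omega
        simp [hSe]
      · have hmap : ∀ I ∈ S, I.card ∈ Finset.Icc k (l-1) := by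
          intro I hI
          obtain ⟨hI0, hIF⟩ := mem_filter.1 hI
          obtain ⟨hIFF, hIM⟩ := mem_filter.1 hI0
          have h1 := (hF _ hIFF).2.1
          have h2 := (hF _ hIF).2.2
          have h3 : (insert (m+1) I).card = I.card + 1 := card_insert_of_notMem hIM
          rw [mem_Icc]
          omega
        have hinj : Set.InjOn (fun I : Finset ℕ => I.card) S := by
          intro I hI I' hI' hEq
          by_contra hne
          have hI2 := Finset.mem_coe.1 hI
          have hI2' := Finset.mem_coe.1 hI'
          obtain ⟨hI0, hIF⟩ := mem_filter.1 hI2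
          obtain ⟨hIFF, hIM⟩ := mem_filter.1 hI0
          obtain ⟨hI0', hIF'⟩ := mem_filter.1 hI2'
          obtain ⟨hIFF', hIM'⟩ := mem_filter.1 hI0'
          exact ws_card_ne hIM hIM' (hle _ hIFF) (hle _ hIFF') hne hEq
            (hws I hIFF _ hIF') (hws I' hIFF' _ hIF)
        have hc := card_le_card_of_injOn (fun I : Finset ℕ => I.card) hmap hinj
        rw [Nat.card_Icc] at hc
        omega
    have hFG : F.card ≤ G.card + S.card := by
      have h1 := card_le_card hsubS
      omega
    calc F.card ≤ G.card + S.card := hFG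
      _ ≤ ((m+1).choose 2 - (m+1 - min l m).choose 2 - (k-1+1).choose 2 + 1) + (l - k) :=
          Nat.add_le_add hIH hcardS
      _ ≤ (m+1+1).choose 2 - (m+1+1-l).choose 2 - (k+1).choose 2 + 1 :=
          key_ineq hkl hlm
end

section
/- A solid path in a partial staircase L is non-kissing with every other monotone lattice path contained in L; equivalently, the corresponding solid subset is non-crossing with every element of 2^[m]_L. -/
open Finset

/-- A solid path in `L`: it either moves east (possibly zero distance), then north
until it cannot do so any longer, then east (possibly zero distance) to a sink; or
moves north (possibly zero distance), then east until it cannot do so any longer,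
then north (possibly zero distance) to a sink.  The subset records the positions of
the north steps. -/
def Solid (m : ℕ) (A : Finset ℕ) (I : Finset ℕ) : Prop :=
  (∃ a b, a + b ≤ m ∧ I = Finset.Icc (a+1) (a+b) ∧ ¬ InL m A a (b+1)) ∨
  (∃ a b, a + b ≤ m ∧ I = Finset.Icc 1 a ∪ Finset.Icc (a+b+1) m ∧ ¬ InL m A (b+1) a)

/-!
Write `p t` and `q t` for the `t`-th smallest elements of `I` and `J`, with `⊤` past the end.
Stripping the common part leaves consecutive positions `i < j` separated only by positions where
`p` and `q` agree. A solid `I` is made of one or two runs of consecutive integers, so on such a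
window `q t = c + t`, and since `q` is injective, neither `q i` nor `q j` lies strictly between
`c + i` and `c + j`. This excludes every crossing, except those that would send `J` through
the node just beyond the corner of the solid path, which is missing from `L` by maximality.
A kiss with a solid path is excluded the same way: it would put `J` on that missing node.
-/

lemma entry_eq (l : List ℕ) (s : ℕ) :
    entry l s = (l[s]?.map (fun n : ℕ => (n : WithTop ℕ))).getD ⊤ := by
  induction l generalizing s with
  | nil => rfl
  | cons x l ih => cases s with
    | zero => rfl
    | succ s => exact ih s

lemma entry_of_lt {l : List ℕ} {s : ℕ} (h : s < l.length) : entry l s = l[s] := by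
  simp [entry_eq, h]

lemma entry_eq_top_iff {l : List ℕ} {s : ℕ} : entry l s = ⊤ ↔ l.length ≤ s := by
  simp [entry_eq, Option.getD_eq_iff]

lemma entry_eraseIdx (l : List ℕ) (i s : ℕ) :
    entry (l.eraseIdx i) s = entry l (if s < i then s else s + 1) := by
  rw [entry_eq, entry_eq, List.getElem?_eraseIdx]
  split_ifs <;> rfl

def CommonOn (p q : ℕ → WithTop ℕ) (S : Set ℕ) : Prop :=
  ∀ t ∈ S, p t ≠ ⊤ ∧ p t = q t

lemma CommonOn.symm {p q : ℕ → WithTop ℕ} {S : Set ℕ} (h : CommonOn p q S) : CommonOn q p S :=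
  fun t ht => ⟨(h t ht).2 ▸ (h t ht).1, (h t ht).2.symm⟩

lemma CommonOn.eq_add {p q : ℕ → WithTop ℕ} {S : Set ℕ} (h : CommonOn p q S) {c : ℕ}
    (hp : ∀ t ∈ S, p t ≠ ⊤ → p t = ↑(c + t)) : ∀ t ∈ S, q t = ↑(c + t) :=
  fun t ht => (h t ht).2 ▸ hp t ht (h t ht).1

lemma stripOnce_eq_some {P Q P' Q' : List ℕ} (h : stripOnce P Q = some (P', Q')) :
    ∃ s, entry P s ≠ ⊤ ∧ entry P s = entry Q s ∧ P' = P.eraseIdx s ∧ Q' = Q.eraseIdx s := by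
  obtain ⟨s, hfind, hs⟩ := Option.map_eq_some_iff.mp h
  obtain ⟨hP, hQ⟩ := Prod.mk.inj hs
  have hlt : s < min P.length Q.length := by simpa using List.mem_of_find?_eq_some hfind
  have heq : P.getD s 0 = Q.getD s 0 := by simpa using List.find?_some hfind
  simp only [lt_min_iff] at hlt
  simp only [List.getD_eq_getElem _ _ hlt.1, List.getD_eq_getElem _ _ hlt.2] at heq
  exact ⟨s, by simp [entry_of_lt hlt.1], by rw [entry_of_lt hlt.1, entry_of_lt hlt.2, heq],
    hP.symm, hQ.symm⟩

lemma exists_strictMono_stripAux (n : ℕ) (P Q : List ℕ) :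
    ∃ f : ℕ → ℕ, StrictMono f ∧ (∀ s, entry (stripAux n P Q).1 s = entry P (f s)) ∧
      (∀ s, entry (stripAux n P Q).2 s = entry Q (f s)) ∧
      ∀ s, CommonOn (entry P) (entry Q) (Set.Ioo (f s) (f (s + 1))) := by
  induction n generalizing P Q with
  | zero => exact ⟨id, strictMono_id, fun _ => rfl, fun _ => rfl, fun s t ht => by simp at ht; omega⟩
  | succ n ih =>
    rcases hs : stripOnce P Q with _ | ⟨P', Q'⟩
    · refine ⟨id, strictMono_id, fun _ => by simp [stripAux, hs], fun _ => by simp [stripAux, hs],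
        fun s t ht => by simp at ht; omega⟩
    obtain ⟨r, hr, hPQr, rfl, rfl⟩ := stripOnce_eq_some hs
    obtain ⟨f, hf, hfP, hfQ, hfc⟩ := ih (P.eraseIdx r) (Q.eraseIdx r)
    set g : ℕ → ℕ := fun t => if t < r then t else t + 1 with hg
    have hgmono : StrictMono g := fun x y hxy => by simp only [hg]; split_ifs <;> omega
    have hgsurj : ∀ t ≠ r, ∃ t', g t' = t := fun t ht =>
      ⟨if t < r then t else t - 1, by simp only [hg]; split_ifs <;> omega⟩
    refine ⟨g ∘ f, hgmono.comp hf, fun s => ?_, fun s => ?_, fun s t ht => ?_⟩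
    · simp [stripAux, hs, hfP, entry_eraseIdx, hg]
    · simp [stripAux, hs, hfQ, entry_eraseIdx, hg]
    · by_cases htr : t = r
      · exact htr ▸ ⟨hr, hPQr⟩
      obtain ⟨t', rfl⟩ := hgsurj t htr
      have := hfc s t' ⟨hgmono.lt_iff_lt.mp ht.1, hgmono.lt_iff_lt.mp ht.2⟩
      simpa only [entry_eraseIdx] using this

lemma listsNonCrossing_of_commonOn {P Q : List ℕ}
    (h : ∀ i j, i < j → CommonOn (entry P) (entry Q) (Set.Ioo i j) →
      PairNonCrossing (entry P i) (entry P j) (entry Q i) (entry Q j)) :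
    ListsNonCrossing P Q := by
  obtain ⟨f, hf, hP, hQ, hc⟩ := exists_strictMono_stripAux P.length P Q
  intro s _
  simp only [strip, hP, hQ]
  exact h _ _ (hf s.lt_succ_self) (hc s)

lemma pairNonCrossing_comm {u v x y : WithTop ℕ} :
    PairNonCrossing u v x y ↔ PairNonCrossing x y u v := by
  unfold PairNonCrossing; tauto

lemma northCount_succ (I : Finset ℕ) (k : ℕ) :
    northCount I (k + 1) = northCount I k + if k + 1 ∈ I then 1 else 0 := by
  have : I.filter (· ≤ k + 1) = (I.filter (· ≤ k)).disjUnion (I.filter (· = k + 1))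
      (Finset.disjoint_filter.mpr fun x _ (h : x ≤ k) (h' : x = k + 1) => by omega) := by
    ext x
    simp only [Finset.mem_filter, Finset.mem_disjUnion, ← and_or_left, Nat.le_succ_iff]
  rw [northCount, northCount, this, Finset.card_disjUnion, Finset.filter_eq']
  split_ifs <;> simp

lemma northCount_le {I : Finset ℕ} (h0 : 0 ∉ I) (k : ℕ) : northCount I k ≤ k := by
  calc northCount I k ≤ (Icc 1 k).card :=
        Finset.card_le_card fun x hx => by
          have := Finset.mem_filter.mp hx
          exact Finset.mem_Icc.mpr
            ⟨Nat.one_le_iff_ne_zero.mpr fun h => h0 (h ▸ this.1), this.2⟩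
    _ = k := by simp

lemma northCount_pos_of_mem {I : Finset ℕ} {k : ℕ} (hk : k ∈ I) : 0 < northCount I k :=
  Finset.card_pos.mpr ⟨k, Finset.mem_filter.mpr ⟨hk, le_rfl⟩⟩

lemma northCount_Icc (u v k : ℕ) : northCount (Icc u v) k = min v k + 1 - u := by
  have : (Icc u v).filter (· ≤ k) = Icc u (min v k) := by
    ext x; simp only [Finset.mem_filter, Finset.mem_Icc]; omega
  rw [northCount, this, Nat.card_Icc]

lemma northCount_union {S T : Finset ℕ} (h : Disjoint S T) (k : ℕ) :
    northCount (S ∪ T) k = northCount S k + northCount T k := by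
  simp only [northCount, Finset.filter_union,
    Finset.card_union_of_disjoint (Finset.disjoint_filter_filter h)]

lemma northCount_Icc_union_Icc (a b m k : ℕ) :
    northCount (Icc 1 a ∪ Icc (a + b + 1) m) k = min a k + (min m k - (a + b)) := by
  have hdisj : Disjoint (Icc 1 a) (Icc (a + b + 1) m) :=
    Finset.disjoint_left.mpr fun x hx hx' => by simp only [Finset.mem_Icc] at hx hx'; omega
  rw [northCount_union hdisj, northCount_Icc, northCount_Icc]
  omega

lemma northCount_eq_card {m : ℕ} {J : Finset ℕ} (hJ : J ⊆ Icc 1 m) :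
    northCount J m = J.card := by
  rw [northCount, Finset.filter_true_of_mem fun x hx => (Finset.mem_Icc.mp (hJ hx)).2]

lemma mem_sortedList {I : Finset ℕ} {x : ℕ} : x ∈ sortedList I ↔ x ∈ I :=
  Finset.mem_sort _

lemma northCount_getElem_sortedList (I : Finset ℕ) {t : ℕ} (ht : t < (sortedList I).length) :
    northCount I (sortedList I)[t] = t + 1 := by
  have hl : (sortedList I).SortedLT := Finset.sortedLT_sort I
  have hfilter : I.filter (· ≤ (sortedList I)[t]) = ((sortedList I).take (t + 1)).toFinset := by
    ext x
    simp only [Finset.mem_filter, List.mem_toFinset, List.mem_take_iff_getElem]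
    constructor
    · rintro ⟨hx, hxt⟩
      obtain ⟨s, hs, rfl⟩ := List.mem_iff_getElem.mp (mem_sortedList.mpr hx)
      exact ⟨s, by have := hl.getElem_le_getElem_iff.mp hxt; omega, rfl⟩
    · rintro ⟨s, hs, rfl⟩
      exact ⟨mem_sortedList.mp (List.getElem_mem _), hl.getElem_le_getElem_iff.mpr (by omega)⟩
  rw [northCount, hfilter, List.toFinset_card_of_nodup hl.nodup.take, List.length_take]
  omega

def sortedEntry (I : Finset ℕ) : ℕ → WithTop ℕ := entry (sortedList I)

lemma sortedEntry_eq_top_iff {I : Finset ℕ} {t : ℕ} :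
    sortedEntry I t = ⊤ ↔ I.card ≤ t := by
  simp [sortedEntry, entry_eq_top_iff, sortedList]

lemma mem_and_northCount_of_sortedEntry_eq {I : Finset ℕ} {t n : ℕ} (h : sortedEntry I t = n) :
    n ∈ I ∧ northCount I n = t + 1 := by
  have ht : t < (sortedList I).length := by
    by_contra ht; rw [sortedEntry, entry_eq_top_iff.mpr (not_lt.mp ht)] at h; simp at h
  rw [sortedEntry, entry_of_lt ht, Nat.cast_inj] at h
  subst h
  exact ⟨mem_sortedList.mp (List.getElem_mem _), northCount_getElem_sortedList I ht⟩

lemma exists_sortedEntry_eq {I : Finset ℕ} {t : ℕ} (ht : t < I.card) :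
    ∃ n : ℕ, sortedEntry I t = n ∧ n ∈ I ∧ northCount I n = t + 1 := by
  obtain ⟨n, hn⟩ := WithTop.ne_top_iff_exists.mp (mt sortedEntry_eq_top_iff.mp (not_le.mpr ht))
  exact ⟨n, hn.symm, mem_and_northCount_of_sortedEntry_eq hn.symm⟩

lemma injOn_sortedEntry (I : Finset ℕ) :
    Set.InjOn (sortedEntry I) {t | sortedEntry I t ≠ ⊤} := by
  intro s hs t _ hst
  obtain ⟨n, hn⟩ := WithTop.ne_top_iff_exists.mp hs
  have hs' := (mem_and_northCount_of_sortedEntry_eq hn.symm).2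
  have ht' := (mem_and_northCount_of_sortedEntry_eq (hst ▸ hn.symm)).2
  omega

lemma one_add_le_sortedEntry {J : Finset ℕ} (h0 : 0 ∉ J) (t : ℕ) :
    ↑(1 + t) ≤ sortedEntry J t := by
  by_cases ht : t < J.card
  · obtain ⟨n, hn, -, hcount⟩ := exists_sortedEntry_eq ht
    rw [hn]
    exact WithTop.coe_le_coe.mpr (show 1 + t ≤ n by have := northCount_le h0 n; omega)
  · rw [sortedEntry_eq_top_iff.mpr (not_lt.mp ht)]
    exact le_top

lemma CommonOn.le_card {p : ℕ → WithTop ℕ} {J : Finset ℕ} {i j : ℕ}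
    (hc : CommonOn p (sortedEntry J) (Set.Ioo i j)) (hi : i < J.card) : j ≤ J.card := by
  by_contra hj
  obtain ⟨hfin, heq⟩ := hc J.card ⟨hi, by omega⟩
  exact hfin (heq.trans (sortedEntry_eq_top_iff.mpr le_rfl))

lemma setsNonCrossing_of_commonOn {I J : Finset ℕ}
    (h : ∀ i j, i < j → CommonOn (sortedEntry I) (sortedEntry J) (Set.Ioo i j) →
      PairNonCrossing (sortedEntry I i) (sortedEntry I j) (sortedEntry J i) (sortedEntry J j)) :
    SetsNonCrossing I J := by
  unfold SetsNonCrossing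
  split
  · exact listsNonCrossing_of_commonOn h
  · exact listsNonCrossing_of_commonOn fun i j hij hc =>
      pairNonCrossing_comm.mp (h i j hij hc.symm)

lemma notMem_Ioo_of_eqOn_Ioo {q : ℕ → WithTop ℕ} (hq : Set.InjOn q {t | q t ≠ ⊤})
    {c i j : ℕ} (hmid : ∀ t ∈ Set.Ioo i j, q t = ↑(c + t)) :
    ∀ k ∉ Set.Ioo i j, q k ∉ Set.Ioo (↑(c + i) : WithTop ℕ) ↑(c + j) := by
  rintro k hk ⟨hlo, hhi⟩
  obtain ⟨n, hn⟩ := WithTop.ne_top_iff_exists.mp hhi.ne_top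
  rw [← hn] at hlo hhi
  have hlo : c + i < n := WithTop.coe_lt_coe.mp hlo
  have hhi : n < c + j := WithTop.coe_lt_coe.mp hhi
  have hmem : n - c ∈ Set.Ioo i j := ⟨by omega, by omega⟩
  have hqn : q (n - c) = n := by rw [hmid _ hmem]; congr 1; omega
  have hkn : n - c = k :=
    hq (show q (n - c) ≠ ⊤ by simp [hqn]) (show q k ≠ ⊤ by simp [← hn]) (hqn.trans hn)
  exact hk (hkn ▸ hmem)

lemma PathInL.inL_of_le {m : ℕ} {A J : Finset ℕ} (hJL : PathInL m A J) {k x y : ℕ}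
    (hk : k ≤ m) (hx : x + northCount J k ≤ k) (hy : y ≤ northCount J k) : InL m A x y := by
  obtain ⟨j, hj, h1, h2⟩ := hJL k hk
  exact ⟨j, hj, by omega, by omega⟩

lemma lt_add_card_of_not_inL {m : ℕ} {A J : Finset ℕ} (hJ : J ⊆ Icc 1 m)
    (hJL : PathInL m A J) {x y : ℕ} (hxy : ¬ InL m A x y) (hy : y ≤ J.card) :
    m < x + J.card := by
  have hcount := northCount_eq_card hJ
  by_contra hlt
  exact hxy (hJL.inL_of_le le_rfl (by omega) (by omega))

lemma sortedEntry_lt_of_not_inL {m : ℕ} {A J : Finset ℕ} (hJ : J ⊆ Icc 1 m)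
    (hJL : PathInL m A J) {x y t n : ℕ} (hxy : ¬ InL m A x y) (hy : y ≤ t + 1)
    (h : sortedEntry J t = n) : n < x + t + 1 := by
  obtain ⟨hn, hcount⟩ := mem_and_northCount_of_sortedEntry_eq h
  by_contra hlt
  exact hxy (hJL.inL_of_le (Finset.mem_Icc.mp (hJ hn)).2 (by omega) (by omega))

lemma sortedEntry_Icc (a b t : ℕ) :
    sortedEntry (Icc (a + 1) (a + b)) t = if t < b then ↑(a + 1 + t) else ⊤ := by
  split_ifs with ht
  · obtain ⟨n, hn, hmem, hcount⟩ :=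
      exists_sortedEntry_eq (I := Icc (a + 1) (a + b)) (by simpa using ht)
    rw [Finset.mem_Icc] at hmem
    rw [northCount_Icc] at hcount
    rw [hn]; congr 1; omega
  · exact sortedEntry_eq_top_iff.mpr (by simpa using ht)

lemma sortedEntry_Icc_union_Icc {m a b : ℕ} (hab : a + b ≤ m) (t : ℕ) :
    sortedEntry (Icc 1 a ∪ Icc (a + b + 1) m) t =
      if t < a then ↑(1 + t) else if t < m - b then ↑(b + 1 + t) else ⊤ := by
  have hcard : (Icc 1 a ∪ Icc (a + b + 1) m).card = m - b := by
    have := northCount_Icc_union_Icc a b m m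
    rw [northCount, Finset.filter_true_of_mem] at this
    · rw [this]; omega
    · intro x hx; simp only [Finset.mem_union, Finset.mem_Icc] at hx; omega
  by_cases ht : t < m - b
  · obtain ⟨n, hn, hmem, hcount⟩ := exists_sortedEntry_eq (hcard ▸ ht)
    simp only [Finset.mem_union, Finset.mem_Icc] at hmem
    rw [northCount_Icc_union_Icc] at hcount
    rw [hn]; split_ifs <;> congr 1 <;> omega
  · rw [if_neg (by omega), if_neg ht]
    exact sortedEntry_eq_top_iff.mpr (by omega)

section Solid

variable {m a b : ℕ} {A J : Finset ℕ}

lemma pairNonCrossing_Icc (hJ : J ⊆ Icc 1 m) (hJL : PathInL m A J)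
    (hnot : ¬ InL m A a (b + 1)) {i j : ℕ} (hij : i < j)
    (hc : CommonOn (sortedEntry (Icc (a + 1) (a + b))) (sortedEntry J) (Set.Ioo i j)) :
    PairNonCrossing (sortedEntry (Icc (a + 1) (a + b)) i)
      (sortedEntry (Icc (a + 1) (a + b)) j) (sortedEntry J i) (sortedEntry J j) := by
  have hmid : ∀ t ∈ Set.Ioo i j, sortedEntry J t = ↑(a + 1 + t) := hc.eq_add fun t _ h => by
    rw [sortedEntry_Icc] at h ⊢
    split_ifs at h ⊢ <;> simp_all
  have hgap := notMem_Ioo_of_eqOn_Ioo (injOn_sortedEntry J) hmid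
  simp only [sortedEntry_Icc]
  constructor
  · rintro ⟨-, huy, hyv⟩
    have hi : i < b := by by_contra hi; rw [if_neg hi] at huy; exact not_top_lt huy
    obtain ⟨n, hn⟩ := WithTop.ne_top_iff_exists.mp hyv.ne_top
    have hnj : n < a + 1 + j := by
      by_cases hj : j < b
      · rw [if_pos hj, ← hn] at hyv; exact WithTop.coe_lt_coe.mp hyv
      · have := sortedEntry_lt_of_not_inL hJ hJL hnot (by omega) hn.symm; omega
    rw [if_pos hi] at huy
    exact hgap j (by simp) ⟨huy, hn ▸ WithTop.coe_lt_coe.mpr hnj⟩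
  · rintro ⟨hux, hxv, hvy⟩
    have hj : j < b := by by_contra hj; rw [if_neg hj] at hvy; exact not_top_lt hvy
    rw [if_pos (hij.trans hj)] at hux
    rw [if_pos hj] at hxv
    exact hgap i (by simp) ⟨hux, hxv⟩

lemma pairNonCrossing_Icc_union_Icc (hab : a + b ≤ m) (hJ : J ⊆ Icc 1 m)
    (hJL : PathInL m A J) (hnot : ¬ InL m A (b + 1) a) {i j : ℕ} (hij : i < j)
    (hc : CommonOn (sortedEntry (Icc 1 a ∪ Icc (a + b + 1) m)) (sortedEntry J)
      (Set.Ioo i j)) :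
    PairNonCrossing (sortedEntry (Icc 1 a ∪ Icc (a + b + 1) m) i)
      (sortedEntry (Icc 1 a ∪ Icc (a + b + 1) m) j)
      (sortedEntry J i) (sortedEntry J j) := by
  simp only [sortedEntry_Icc_union_Icc hab]
  constructor
  · rintro ⟨hxu, huy, hyv⟩
    by_cases hia : i < a
    · rw [if_pos hia] at hxu
      exact (one_add_le_sortedEntry (fun h => by simpa using hJ h) i).not_gt hxu
    have hi : i < m - b := by
      by_contra hi; rw [if_neg hia, if_neg hi] at huy; exact not_top_lt huy
    rw [if_neg hia, if_pos hi] at huy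
    obtain ⟨n, hn⟩ := WithTop.ne_top_iff_exists.mp hyv.ne_top
    have hnj : n < b + 1 + j := by
      by_cases hj : j < m - b
      · rw [if_neg (by omega), if_pos hj, ← hn] at hyv; exact WithTop.coe_lt_coe.mp hyv
      · have := Finset.mem_Icc.mp (hJ (mem_and_northCount_of_sortedEntry_eq hn.symm).1); omega
    have hmid : ∀ t ∈ Set.Ioo i j, sortedEntry J t = ↑(b + 1 + t) :=
      hc.eq_add fun t ht h => by
        rw [sortedEntry_Icc_union_Icc hab, if_neg (by simp at ht; omega)] at h ⊢
        split_ifs at h ⊢ <;> simp_all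
    exact notMem_Ioo_of_eqOn_Ioo (injOn_sortedEntry J) hmid j (by simp)
      ⟨huy, hn ▸ WithTop.coe_lt_coe.mpr hnj⟩
  · rintro ⟨hux, hxv, hvy⟩
    have hj : j < m - b := by
      by_contra hj; rw [if_neg (by omega), if_neg hj] at hvy; exact not_top_lt hvy
    by_cases hja : j < a
    · have hmid : ∀ t ∈ Set.Ioo i j, sortedEntry J t = ↑(1 + t) := hc.eq_add fun t ht h => by
        rw [sortedEntry_Icc_union_Icc hab, if_pos (by simp at ht; omega)]
      rw [if_pos (hij.trans hja)] at hux
      rw [if_pos hja] at hxv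
      exact notMem_Ioo_of_eqOn_Ioo (injOn_sortedEntry J) hmid i (by simp) ⟨hux, hxv⟩
    rw [if_neg hja, if_pos hj] at hvy
    -- `J` reaches height `a`, so it ends west of the missing node `(b + 1, a)`: `j < #J`
    have hi : i < J.card := not_le.mp fun h => hxv.ne_top (sortedEntry_eq_top_iff.mpr h)
    have := lt_add_card_of_not_inL hJ hJL hnot ((not_lt.mp hja).trans (hc.le_card hi))
    obtain ⟨n, hn, -, -⟩ := exists_sortedEntry_eq (show j < J.card by omega)
    have := sortedEntry_lt_of_not_inL hJ hJL hnot (by omega) hn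
    rw [hn] at hvy
    have : b + 1 + j < n := WithTop.coe_lt_coe.mp hvy
    omega

lemma mem_iff_notMem_of_northCount {I J : Finset ℕ} {k : ℕ}
    (h : northCount I k = northCount J k ↔ northCount I (k + 1) ≠ northCount J (k + 1)) :
    k + 1 ∈ I ↔ k + 1 ∉ J := by
  rw [northCount_succ, northCount_succ] at h
  by_cases hI : k + 1 ∈ I <;> by_cases hJ : k + 1 ∈ J <;> simp [hI, hJ] at h ⊢

lemma ProperCommonPart.mem_iff_notMem {m k₁ k₂ : ℕ} {I J : Finset ℕ}
    (h : ProperCommonPart m I J k₁ k₂) :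
    (k₁ ∈ I ↔ k₁ ∉ J) ∧ (k₂ + 1 ∈ I ↔ k₂ + 1 ∉ J) := by
  obtain ⟨hk₁, hk₁₂, -, heq, hne₁, hne₂⟩ := h
  have hk : k₁ - 1 + 1 = k₁ := by omega
  refine ⟨hk ▸ mem_iff_notMem_of_northCount ?_, mem_iff_notMem_of_northCount ?_⟩
  · simp only [hk, heq k₁ le_rfl hk₁₂, ne_eq, not_true_eq_false, iff_false]
    exact hne₁
  · simp only [heq k₂ hk₁₂ le_rfl, true_iff]
    exact hne₂

lemma pathsNonKissing_Icc (hJL : PathInL m A J) (hnot : ¬ InL m A a (b + 1)) :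
    PathsNonKissing m (Icc (a + 1) (a + b)) J := by
  intro k₁ k₂ h
  obtain ⟨h₁, h₂⟩ := h.mem_iff_notMem
  obtain ⟨hk₁, hk₁₂, hk₂, heq, -, -⟩ := h
  simp only [Finset.mem_Icc] at h₁ h₂ ⊢
  constructor
  · intro hk₁I
    by_contra hk₂I
    have hcount : northCount J (k₂ + 1) = b + 1 := by
      rw [northCount_succ, if_pos (not_not.mp (mt h₂.mpr hk₂I)), ← heq k₂ hk₁₂ le_rfl,
        northCount_Icc]
      omega
    exact hnot (hJL.inL_of_le (k := k₂ + 1) hk₂ (by omega) (by omega))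
  · intro hk₂I
    by_contra hk₁I
    have hcount := northCount_pos_of_mem (not_not.mp (mt h₁.mpr hk₁I))
    rw [← heq k₁ le_rfl hk₁₂, northCount_Icc] at hcount
    omega

lemma pathsNonKissing_Icc_union_Icc (hJ : J ⊆ Icc 1 m) (hJL : PathInL m A J)
    (hnot : ¬ InL m A (b + 1) a) :
    PathsNonKissing m (Icc 1 a ∪ Icc (a + b + 1) m) J := by
  have h0 : 0 ∉ J := fun h => by simpa using hJ h
  intro k₁ k₂ h
  obtain ⟨h₁, h₂⟩ := h.mem_iff_notMem
  obtain ⟨hk₁, hk₁₂, hk₂, heq, -, -⟩ := h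
  simp only [Finset.mem_union, Finset.mem_Icc] at h₁ h₂ ⊢
  constructor
  · intro hk₁I
    by_contra hk₂I
    have hcount := northCount_succ J (k₁ - 1)
    rw [Nat.sub_add_cancel hk₁, if_neg (h₁.mp hk₁I), ← heq k₁ le_rfl hk₁₂,
      northCount_Icc_union_Icc] at hcount
    have := northCount_le h0 (k₁ - 1)
    omega
  · intro hk₂I
    by_contra hk₁I
    have hcount : northCount J (k₂ + 1) = k₂ - b := by
      rw [northCount_succ, if_neg (h₂.mp hk₂I), ← heq k₂ hk₁₂ le_rfl,
        northCount_Icc_union_Icc]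
      omega
    exact hnot (hJL.inL_of_le (k := k₂ + 1) hk₂ (by omega) (by omega))

end Solid

theorem solid_nonKissing_general (m : ℕ) (A : Finset ℕ)
    (I J : Finset ℕ) (hJ : J ⊆ Finset.Icc 1 m)
    (hJL : PathInL m A J) (hsolid : Solid m A I) :
    PathsNonKissing m I J ∧ SetsNonCrossing I J := by
  rcases hsolid with ⟨a, b, -, rfl, hnot⟩ | ⟨a, b, hab, rfl, hnot⟩
  · exact ⟨pathsNonKissing_Icc hJL hnot,
      setsNonCrossing_of_commonOn fun _ _ hij hc => pairNonCrossing_Icc hJ hJL hnot hij hc⟩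
  · exact ⟨pathsNonKissing_Icc_union_Icc hJ hJL hnot,
      setsNonCrossing_of_commonOn fun _ _ hij hc =>
        pairNonCrossing_Icc_union_Icc hab hJ hJL hnot hij hc⟩

/-- A solid path in a partial staircase `L` is non-kissing with every other monotone
lattice path contained in `L`; equivalently, the corresponding solid subset is
non-crossing with every element of `2^[m]_L`. -/
theorem solid_nonKissing (m : ℕ) (A : Finset ℕ) (hA : A ⊆ Finset.range (m+1))
    (I J : Finset ℕ) (hI : I ⊆ Finset.Icc 1 m) (hJ : J ⊆ Finset.Icc 1 m)
    (hIL : PathInL m A I) (hJL : PathInL m A J) (hsolid : Solid m A I) :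
    PathsNonKissing m I J ∧ SetsNonCrossing I J :=
  solid_nonKissing_general m A I J hJ hJL hsolid
end

section
/- Let p and q be lattice paths of length m given by {N,E}-words u_1...u_m and v_1...v_m that kiss: they agree as points after their first a steps through step b-1 (coming together at step a and traveling together), and separate at step b without crossing. Define p' with word u_1...u_{b-1} v_b...v_m and q' with word v_1...v_{b-1} u_b...u_m. Then T_p + T_q = T_{p'} + T_{q'}, and with weight w(T_p) = Σ_{1≤i<j≤m} δ_{ij}(p) ε^{j-i} (where δ_{ij}(p) = 0 if u_i = u_j and 1 otherwise) and ε = 1/C(m,2), we have w(T_p) + w(T_q) > w(T_{p'}) + w(T_{q'}). -/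
open Finset

/-- The weight `w(T_p) = Σ_{1 ≤ i < j ≤ m} δ_{ij}(p) ε^{j-i}` with `ε = 1/C(m,2)`,
where `δ_{ij}(p) = 0` if letters `i` and `j` of the word of `p` agree and `1` otherwise. -/
noncomputable def wgt (m : ℕ) (I : Finset ℕ) : ℝ :=
  ∑ q ∈ (Finset.Icc 1 m ×ˢ Finset.Icc 1 m).filter (fun q => q.1 < q.2),
    (if (q.1 ∈ I ↔ q.2 ∈ I) then 0 else (1 / (m.choose 2 : ℝ)) ^ (q.2 - q.1))

/-!
`Tpat I` at a cell only depends on the height `northCount I k` of `p(I)` after `k` steps, for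
a suitable `k`. The two paths are at the same point after step `b - 1`, so up to step `b - 1`
the new paths have the heights of `p(I)` and `p(J)`, and from step `b - 1` on those of `p(J)`
and `p(I)`: the patterns add up to the same sum.

For the weights, a pair of steps `i < j` changes the total weight only if `i < b ≤ j` and the
paths differ at step `i`, which forces `i ≤ a`. So `j - i ≥ b - a`, with equality only for
the pair `(a, b)`, where the kiss makes the total drop by `2 ε ^ (b - a)`. Each of the other
`C(m,2) - 1` pairs raises it by at most `2 ε ^ (b - a + 1)`, and `(C(m,2) - 1) ε < 1`.
-/

lemma sum_pos_of_dominant_term {ι : Type*} [DecidableEq ι] {s : Finset ι} {f : ι → ℝ} {i₀ : ι}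
    (hi₀ : i₀ ∈ s) {c δ : ℝ} (hc : 0 < c) (hf₀ : c ≤ f i₀) (hf : ∀ i ∈ s.erase i₀, -(c * δ) ≤ f i)
    (hδ : ((#s : ℝ) - 1) * δ < 1) : 0 < ∑ i ∈ s, f i := by
  have hrest := card_nsmul_le_sum (s.erase i₀) f _ hf
  rw [card_erase_of_mem hi₀, nsmul_eq_mul, Nat.cast_sub (one_le_card.2 ⟨i₀, hi₀⟩),
    Nat.cast_one] at hrest
  rw [← add_sum_erase s f hi₀]
  nlinarith

lemma northCount_congr {I J : Finset ℕ} {k : ℕ} (h : ∀ i ≤ k, i ∈ I ↔ i ∈ J) :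
    northCount I k = northCount J k := by
  unfold northCount
  congr 1
  ext i
  simp only [mem_filter]
  grind

lemma northCount_eq_of_agree {I J : Finset ℕ} {j k : ℕ} (hjk : j ≤ k)
    (hj : northCount I j = northCount J j) (h : ∀ i, j < i → i ≤ k → (i ∈ I ↔ i ∈ J)) :
    northCount I k = northCount J k := by
  induction k, hjk using Nat.le_induction with
  | base => exact hj
  | succ k hjk ih =>
    rw [northCount_succ, northCount_succ, ih fun i hi hik => h i hi (by omega),
      if_congr (h (k + 1) (by omega) le_rfl) rfl rfl]

lemma Tpat_add_Tpat_eq_of_northCount {I J I' J' : Finset ℕ}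
    (h : ∀ k, (northCount I' k = northCount I k ∧ northCount J' k = northCount J k) ∨
      (northCount I' k = northCount J k ∧ northCount J' k = northCount I k)) (x y : ℤ) :
    Tpat I x y + Tpat J x y = Tpat I' x y + Tpat J' x y := by
  unfold Tpat northCountZ
  rcases h (x + y + 1).toNat with ⟨h₁, h₂⟩ | ⟨h₁, h₂⟩
  · rw [h₁, h₂]
  · rw [h₁, h₂, add_comm]

-- The path `p(tailSwap m b I J)` is `p'`: the first `b - 1` steps of `p(I)`, then those of `p(J)`.
def tailSwap (m b : ℕ) (I J : Finset ℕ) : Finset ℕ := (I ∩ Icc 1 (b - 1)) ∪ (J ∩ Icc b m)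

section tailSwap

variable {m b i : ℕ} {I J : Finset ℕ}

lemma mem_tailSwap_of_lt (hI : I ⊆ Icc 1 m) (hi : i < b) : i ∈ tailSwap m b I J ↔ i ∈ I := by
  have := @hI i
  simp only [tailSwap, mem_union, mem_inter, mem_Icc] at this ⊢
  grind

lemma mem_tailSwap_of_le (hJ : J ⊆ Icc 1 m) (hi : b ≤ i) : i ∈ tailSwap m b I J ↔ i ∈ J := by
  have := @hJ i
  simp only [tailSwap, mem_union, mem_inter, mem_Icc] at this ⊢
  grind

lemma mem_tailSwap_of_agree (hI : I ⊆ Icc 1 m) (hJ : J ⊆ Icc 1 m)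
    (h : i < b → (i ∈ I ↔ i ∈ J)) : i ∈ tailSwap m b I J ↔ i ∈ J := by
  rcases lt_or_ge i b with hi | hi
  · exact (mem_tailSwap_of_lt hI hi).trans (h hi)
  · exact mem_tailSwap_of_le hJ hi

lemma northCount_tailSwap_of_lt (hI : I ⊆ Icc 1 m) {k : ℕ} (hk : k < b) :
    northCount (tailSwap m b I J) k = northCount I k :=
  northCount_congr fun _ hi => mem_tailSwap_of_lt hI (by omega)

lemma northCount_tailSwap_of_le (hI : I ⊆ Icc 1 m) (hJ : J ⊆ Icc 1 m) (hb : 1 ≤ b)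
    (h : northCount I (b - 1) = northCount J (b - 1)) {k : ℕ} (hk : b - 1 ≤ k) :
    northCount (tailSwap m b I J) k = northCount J k :=
  northCount_eq_of_agree hk ((northCount_tailSwap_of_lt hI (by omega)).trans h)
    fun _ hi _ => mem_tailSwap_of_le hJ (by omega)

end tailSwap

theorem Tpat_add_Tpat_tailSwap {m b : ℕ} {I J : Finset ℕ} (hI : I ⊆ Icc 1 m)
    (hJ : J ⊆ Icc 1 m) (hb : 1 ≤ b) (h : northCount I (b - 1) = northCount J (b - 1))
    (x y : ℤ) :
    Tpat I x y + Tpat J x y = Tpat (tailSwap m b I J) x y + Tpat (tailSwap m b J I) x y :=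
  Tpat_add_Tpat_eq_of_northCount (fun k => (lt_or_ge k b).imp
    (fun hk => ⟨northCount_tailSwap_of_lt hI hk, northCount_tailSwap_of_lt hJ hk⟩)
    (fun hk => ⟨northCount_tailSwap_of_le hI hJ hb h (by omega),
      northCount_tailSwap_of_le hJ hI hb h.symm (by omega)⟩)) x y

noncomputable def pairWeight (ε : ℝ) (X : Finset ℕ) (q : ℕ × ℕ) : ℝ :=
  if (q.1 ∈ X ↔ q.2 ∈ X) then 0 else ε ^ (q.2 - q.1)

lemma wgt_eq_sum_pairWeight (m : ℕ) (X : Finset ℕ) :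
    wgt m X = ∑ q ∈ {q ∈ Icc 1 m ×ˢ Icc 1 m | q.1 < q.2}, pairWeight (1 / m.choose 2) X q :=
  rfl

section pairWeight

variable {ε : ℝ} {X Y : Finset ℕ} {q : ℕ × ℕ}

lemma pairWeight_congr (h₁ : q.1 ∈ X ↔ q.1 ∈ Y) (h₂ : q.2 ∈ X ↔ q.2 ∈ Y) :
    pairWeight ε X q = pairWeight ε Y q := by
  simp only [pairWeight, h₁, h₂]

lemma pairWeight_nonneg (hε : 0 ≤ ε) : 0 ≤ pairWeight ε X q := by
  unfold pairWeight
  split_ifs <;> positivity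

lemma pairWeight_le (hε : 0 ≤ ε) : pairWeight ε X q ≤ ε ^ (q.2 - q.1) := by
  unfold pairWeight
  split_ifs
  · positivity
  · rfl

end pairWeight

noncomputable def swapGain (ε : ℝ) (m b : ℕ) (I J : Finset ℕ) (q : ℕ × ℕ) : ℝ :=
  pairWeight ε I q + pairWeight ε J q - pairWeight ε (tailSwap m b I J) q -
    pairWeight ε (tailSwap m b J I) q

section swapGain

variable {ε : ℝ} {m a b : ℕ} {I J : Finset ℕ} {q : ℕ × ℕ}

lemma swapGain_eq_zero (hI : I ⊆ Icc 1 m) (hJ : J ⊆ Icc 1 m) (hq : q.1 ≤ q.2)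
    (h : q.1 < b → b ≤ q.2 → (q.1 ∈ I ↔ q.1 ∈ J)) : swapGain ε m b I J q = 0 := by
  unfold swapGain
  rcases lt_or_ge q.2 b with hq₂ | hq₂
  · rw [pairWeight_congr (mem_tailSwap_of_lt hI (by omega)) (mem_tailSwap_of_lt hI hq₂),
      pairWeight_congr (mem_tailSwap_of_lt hJ (by omega)) (mem_tailSwap_of_lt hJ hq₂)]
    ring
  · rw [pairWeight_congr (mem_tailSwap_of_agree hI hJ fun hq₁ => h hq₁ hq₂)
        (mem_tailSwap_of_le hJ hq₂),
      pairWeight_congr (mem_tailSwap_of_agree hJ hI fun hq₁ => (h hq₁ hq₂).symm)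
        (mem_tailSwap_of_le hI hq₂)]
    ring

lemma swapGain_kiss (hI : I ⊆ Icc 1 m) (hJ : J ⊆ Icc 1 m) (hab : a < b)
    (hsepa : ¬ ((a ∈ I) ↔ (a ∈ J))) (hsepb : ¬ ((b ∈ I) ↔ (b ∈ J)))
    (hkiss : ¬ ((a ∈ I) ↔ (b ∈ I))) : swapGain ε m b I J (a, b) = 2 * ε ^ (b - a) := by
  simp only [swapGain, pairWeight, mem_tailSwap_of_lt hI hab, mem_tailSwap_of_lt hJ hab,
    mem_tailSwap_of_le hI le_rfl, mem_tailSwap_of_le hJ le_rfl]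
  rw [if_neg hkiss, if_neg (by tauto), if_pos (by tauto), if_pos (by tauto)]
  ring

lemma neg_two_mul_pow_le_swapGain (hε : 0 ≤ ε) :
    -(2 * ε ^ (q.2 - q.1)) ≤ swapGain ε m b I J q := by
  unfold swapGain
  linarith [pairWeight_nonneg (X := I) (q := q) hε, pairWeight_nonneg (X := J) (q := q) hε,
    pairWeight_le (X := tailSwap m b I J) (q := q) hε,
    pairWeight_le (X := tailSwap m b J I) (q := q) hε]

lemma neg_two_mul_pow_succ_le_swapGain (hI : I ⊆ Icc 1 m) (hJ : J ⊆ Icc 1 m) (hε₀ : 0 ≤ ε)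
    (hε₁ : ε ≤ 1) (htog : ∀ i, a < i → i < b → ((i ∈ I) ↔ (i ∈ J))) (hq : q.1 ≤ q.2)
    (hne : q ≠ (a, b)) : -(2 * ε ^ (b - a + 1)) ≤ swapGain ε m b I J q := by
  by_cases h : q.1 < b → b ≤ q.2 → (q.1 ∈ I ↔ q.1 ∈ J)
  · rw [swapGain_eq_zero hI hJ hq h]
    have := pow_nonneg hε₀ (b - a + 1)
    linarith
  simp only [Classical.not_imp] at h
  obtain ⟨hq₁, hq₂, hsep⟩ := h
  have hqa : q.1 ≤ a := by
    by_contra! hqa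
    exact hsep (htog q.1 hqa hq₁)
  have hlong : b - a + 1 ≤ q.2 - q.1 := by
    have : q.1 ≠ a ∨ q.2 ≠ b := by
      by_contra! h
      exact hne (Prod.ext h.1 h.2)
    omega
  calc -(2 * ε ^ (b - a + 1)) ≤ -(2 * ε ^ (q.2 - q.1)) := by
        linarith [pow_le_pow_of_le_one hε₀ hε₁ hlong]
    _ ≤ swapGain ε m b I J q := neg_two_mul_pow_le_swapGain hε₀

end swapGain

theorem wgt_tailSwap_add_lt {m a b : ℕ} {I J : Finset ℕ} (hI : I ⊆ Icc 1 m)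
    (hJ : J ⊆ Icc 1 m) (ha : 1 ≤ a) (hab : a < b) (hbm : b ≤ m)
    (hsepa : ¬ ((a ∈ I) ↔ (a ∈ J))) (htog : ∀ i, a < i → i < b → ((i ∈ I) ↔ (i ∈ J)))
    (hsepb : ¬ ((b ∈ I) ↔ (b ∈ J))) (hkiss : ¬ ((a ∈ I) ↔ (b ∈ I))) :
    wgt m (tailSwap m b I J) + wgt m (tailSwap m b J I) < wgt m I + wgt m J := by
  set ε : ℝ := 1 / m.choose 2
  set S := {q ∈ Icc 1 m ×ˢ Icc 1 m | q.1 < q.2}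
  have hC : (1 : ℝ) ≤ m.choose 2 := by exact_mod_cast Nat.choose_pos (by omega)
  have hε₀ : 0 < ε := by positivity
  have hε₁ : ε ≤ 1 := div_le_one_of_le₀ hC (by positivity)
  have hgain : 0 < ∑ q ∈ S, swapGain ε m b I J q := by
    refine sum_pos_of_dominant_term (i₀ := (a, b)) (δ := ε) (by simp [S]; omega) (by positivity)
      (swapGain_kiss hI hJ hab hsepa hsepb hkiss).ge (fun q hq => ?_) ?_
    · obtain ⟨hne, hqS⟩ := mem_erase.1 hq
      rw [mul_assoc, ← pow_succ]
      exact neg_two_mul_pow_succ_le_swapGain hI hJ hε₀.le hε₁ htog (mem_filter.1 hqS).2.le hne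
    · rw [card_product_filter_lt, Nat.card_Icc, add_tsub_cancel_right, sub_one_mul, mul_one_div_cancel (by positivity)]
      linarith
  simp only [swapGain, sum_sub_distrib, sum_add_distrib] at hgain
  rw [wgt_eq_sum_pairWeight, wgt_eq_sum_pairWeight, wgt_eq_sum_pairWeight, wgt_eq_sum_pairWeight]
  linarith

/-- Resolving a kiss: if paths `p = p(I)` and `q = p(J)` come together at step `a`,
travel together through step `b-1`, and separate at step `b` without crossing, then
swapping tails at step `b` produces paths `p'`, `q'` with `T_p + T_q = T_{p'} + T_{q'}`
and strictly smaller total weight `w(T_{p'}) + w(T_{q'}) < w(T_p) + w(T_q)`. -/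
theorem kiss_swap (m a b : ℕ) (I J : Finset ℕ)
    (hI : I ⊆ Finset.Icc 1 m) (hJ : J ⊆ Finset.Icc 1 m)
    (ha : 1 ≤ a) (hab : a < b) (hbm : b ≤ m)
    (hmeet : northCount I a = northCount J a)
    (hsepa : ¬ ((a ∈ I) ↔ (a ∈ J)))
    (htog : ∀ i, a < i → i < b → ((i ∈ I) ↔ (i ∈ J)))
    (hsepb : ¬ ((b ∈ I) ↔ (b ∈ J)))
    (hkiss : ¬ ((a ∈ I) ↔ (b ∈ I))) :
    (∀ x y : ℤ,
      Tpat I x y + Tpat J x y =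
        Tpat ((I ∩ Finset.Icc 1 (b-1)) ∪ (J ∩ Finset.Icc b m)) x y +
        Tpat ((J ∩ Finset.Icc 1 (b-1)) ∪ (I ∩ Finset.Icc b m)) x y) ∧
    wgt m ((I ∩ Finset.Icc 1 (b-1)) ∪ (J ∩ Finset.Icc b m)) +
      wgt m ((J ∩ Finset.Icc 1 (b-1)) ∪ (I ∩ Finset.Icc b m)) < wgt m I + wgt m J := by
  have htogether : northCount I (b - 1) = northCount J (b - 1) :=
    northCount_eq_of_agree (by omega) hmeet fun i hai hib => htog i hai (by omega)
  exact ⟨Tpat_add_Tpat_tailSwap hI hJ (by omega) htogether,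
    wgt_tailSwap_add_lt hI hJ ha hab hbm hsepa htog hsepb hkiss⟩
end
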